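/- If a lambda term t is beta-eta-equivalent to a closed term, then t is beta-equivalent to a closed term. -/

import Mathlib

/-- Untyped lambda terms (de Bruijn representation). -/
inductive Lam : Type
| var : ℕ → Lam
| app : Lam → Lam → Lam
| lam : Lam → Lam

namespace Lam

/-- Lift (shift) the free indices ≥ d by one. -/
def lift : Lam → ℕ → Lam
| var i, d => if i < d then var i else var (i+1)
| app a b, d => app (a.lift d) (b.lift d)
| lam a, d => lam (a.lift (d+1))

/-- Substitution of `u` for the de Bruijn index `k`. -/
def subst : Lam → ℕ → Lam → Lam
| var i, k, u => if i = k then u else if k < i then var (i-1) else var i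
| app a b, k, u => app (a.subst k u) (b.subst k u)
| lam a, k, u => lam (a.subst (k+1) (u.lift 0))

/-- Free variables. -/
def FV : Lam → Set ℕ
| var i => {i}
| app a b => a.FV ∪ b.FV
| lam a => {i | i + 1 ∈ a.FV}

end Lam

/-- One-step beta reduction. -/
inductive Beta : Lam → Lam → Prop
| head (a u : Lam) : Beta (.app (.lam a) u) (a.subst 0 u)
| appL {a a' : Lam} (b : Lam) : Beta a a' → Beta (.app a b) (.app a' b)
| appR (a : Lam) {b b' : Lam} : Beta b b' → Beta (.app a b) (.app a b')
| lam {a a' : Lam} : Beta a a' → Beta (.lam a) (.lam a')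

/-- One-step eta reduction: `λx.(t)x → t` when `x ∉ Fv t`
(in de Bruijn style, the body is a lifted term applied to index 0). -/
inductive Eta : Lam → Lam → Prop
| head (a : Lam) : Eta (.lam (.app (a.lift 0) (.var 0))) a
| appL {a a' : Lam} (b : Lam) : Eta a a' → Eta (.app a b) (.app a' b)
| appR (a : Lam) {b b' : Lam} : Eta b b' → Eta (.app a b) (.app a b')
| lam {a a' : Lam} : Eta a a' → Eta (.lam a) (.lam a')

/-- One-step beta-eta reduction. -/
def BetaEta (t u : Lam) : Prop := Beta t u ∨ Eta t u

def BetaStar : Lam → Lam → Prop := Relation.ReflTransGen Beta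
def EtaStar : Lam → Lam → Prop := Relation.ReflTransGen Eta
def BetaEtaStar : Lam → Lam → Prop := Relation.ReflTransGen BetaEta

/-- Beta-equivalence: smallest equivalence relation containing one-step beta. -/
def BetaEqv : Lam → Lam → Prop := Relation.EqvGen Beta
/-- Beta-eta-equivalence. -/
def BetaEtaEqv : Lam → Lam → Prop := Relation.EqvGen BetaEta

/-- Normal form: no beta- or eta-redex. -/
def NormalForm (t : Lam) : Prop := ∀ u, ¬ BetaEta t u
/-- Normalizable: beta-eta-reduces to a normal form. -/
def Normalizable (t : Lam) : Prop := ∃ u, BetaEtaStar t u ∧ NormalForm u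
/-- Closed term: no free variables. -/
def Closed (t : Lam) : Prop := t.FV = ∅

/-- Beta-saturated set of lambda terms. -/
def Saturated (G : Set Lam) : Prop := ∀ t u, BetaStar t u → u ∈ G → t ∈ G
/-- Set closed under beta-eta-equivalence. -/
def SaturatedBE (G : Set Lam) : Prop := ∀ t u, BetaEtaEqv t u → u ∈ G → t ∈ G
/-- Arrow construction on sets of lambda terms. -/
def ArrowSet (G G' : Set Lam) : Set Lam := {u | ∀ t ∈ G, Lam.app u t ∈ G'}

open Lam

theorem lift_lift (t : Lam) : ∀ {e d : ℕ}, e ≤ d →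
    (t.lift e).lift (d+1) = (t.lift d).lift e := by
  induction t with
  | var i =>
    intro e d h; simp only [Lam.lift]; split_ifs <;> simp only [Lam.lift] <;>
      split_ifs <;> (first | rfl | omega)
  | app a b iha ihb =>
    intro e d h; simp only [Lam.lift, iha h, ihb h]
  | lam a ih =>
    intro e d h; simp only [Lam.lift]; rw [ih (by omega)]

theorem lift_subst_le (a : Lam) : ∀ (b : Lam) {e k : ℕ}, e ≤ k →
    (a.subst k b).lift e = (a.lift e).subst (k+1) (b.lift e) := by
  induction a with
  | var i =>
    intro b e k h; simp only [Lam.subst, Lam.lift]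
    split_ifs <;> simp only [Lam.subst, Lam.lift] <;> split_ifs <;>
      (first | rfl | omega | (congr 1; omega))
  | app a c iha ihc =>
    intro b e k h; simp only [Lam.subst, Lam.lift, iha b h, ihc b h]
  | lam a ih =>
    intro b e k h; simp only [Lam.subst, Lam.lift]
    rw [ih (b.lift 0) (by omega : e+1 ≤ k+1), lift_lift b (by omega : 0 ≤ e)]

theorem lift_subst_ge (a : Lam) : ∀ (b : Lam) {k d : ℕ}, k ≤ d →
    (a.subst k b).lift d = (a.lift (d+1)).subst k (b.lift d) := by
  induction a with
  | var i =>
    intro b k d h; simp only [Lam.subst, Lam.lift]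
    split_ifs <;> simp only [Lam.subst, Lam.lift] <;> split_ifs <;>
      (first | rfl | omega | (congr 1; omega))
  | app a c iha ihc =>
    intro b k d h; simp only [Lam.subst, Lam.lift, iha b h, ihc b h]
  | lam a ih =>
    intro b k d h; simp only [Lam.subst, Lam.lift]
    rw [ih (b.lift 0) (by omega : k+1 ≤ d+1), lift_lift b (by omega : 0 ≤ d)]

theorem subst_lift (a : Lam) : ∀ (k : ℕ) (u : Lam), (a.lift k).subst k u = a := by
  induction a with
  | var i =>
    intro k u; simp only [Lam.lift]
    split_ifs <;> simp only [Lam.subst] <;> split_ifs <;>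
      (first | rfl | omega | (congr 1; omega))
  | app a b iha ihb =>
    intro k u; simp only [Lam.lift, Lam.subst, iha, ihb]
  | lam a ih =>
    intro k u; simp only [Lam.lift, Lam.subst, ih]

theorem subst_lift_succ (a : Lam) : ∀ (k : ℕ), (a.lift (k+1)).subst k (.var k) = a := by
  induction a with
  | var i =>
    intro k; simp only [Lam.lift]
    split_ifs <;> simp only [Lam.subst] <;> split_ifs <;>
      (first | rfl | omega | (congr 1; omega))
  | app a b iha ihb =>
    intro k; simp only [Lam.lift, Lam.subst, iha, ihb]
  | lam a ih =>
    intro k; simp only [Lam.lift, Lam.subst]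
    have h0 : (if k < 0 then Lam.var k else Lam.var (k+1)) = Lam.var (k+1) := by
      simp
    rw [h0, ih]

theorem subst_subst (a : Lam) : ∀ (b c : Lam) {j k : ℕ}, j ≤ k →
    (a.subst j b).subst k c = (a.subst (k+1) (c.lift j)).subst j (b.subst k c) := by
  induction a with
  | var i =>
    intro b c j k h
    rcases eq_or_ne i j with rfl | hij
    · simp only [Lam.subst]
      split_ifs <;>
        first
          | rfl | omega
          | (simp only [Lam.subst]; split_ifs <;> (first | rfl | omega))
    · rcases eq_or_ne i (k+1) with rfl | hik
      · simp only [Lam.subst]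
        split_ifs <;> (first | omega | skip)
        simp only [Nat.add_sub_cancel, Lam.subst]
        split_ifs <;> (first | omega | exact (subst_lift c j (b.subst k c)).symm)
      · simp only [Lam.subst]; split_ifs <;> simp only [Lam.subst] <;> split_ifs <;>
          (first | rfl | omega | (congr 1; omega))
  | app a d iha ihd =>
    intro b c j k h; simp only [Lam.subst, iha b c h, ihd b c h]
  | lam a ih =>
    intro b c j k h; simp only [Lam.subst]
    rw [ih (b.lift 0) (c.lift 0) (by omega : j+1 ≤ k+1),
        lift_lift c (by omega : 0 ≤ j), lift_subst_le b (c) (by omega : 0 ≤ k)]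

inductive Par : Lam → Lam → Prop
| var (i : ℕ) : Par (.var i) (.var i)
| app {a a' b b' : Lam} : Par a a' → Par b b' → Par (.app a b) (.app a' b')
| lam {a a' : Lam} : Par a a' → Par (.lam a) (.lam a')
| beta {a a' b b' : Lam} : Par a a' → Par b b' → Par (.app (.lam a) b) (a'.subst 0 b')

theorem par_refl (a : Lam) : Par a a := by
  induction a with
  | var i => exact .var i
  | app a b iha ihb => exact .app iha ihb
  | lam a ih => exact .lam ih

theorem par_lift {a b : Lam} (h : Par a b) : ∀ d, Par (a.lift d) (b.lift d) := by
  induction h with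
  | var i =>
    intro d; simp only [Lam.lift]; split_ifs <;> exact par_refl _
  | app _ _ iha ihb => intro d; exact .app (iha d) (ihb d)
  | lam _ ih => intro d; exact .lam (ih (d+1))
  | @beta p p' q q' _ _ ihp ihq =>
    intro d
    have h2 : Par (Lam.app (Lam.lam (p.lift (d+1))) (q.lift d))
        ((p'.lift (d+1)).subst 0 (q'.lift d)) := .beta (ihp (d+1)) (ihq d)
    simp only [Lam.lift]
    rw [lift_subst_ge p' q' (Nat.zero_le d)]
    exact h2

theorem par_subst {a a' : Lam} (ha : Par a a') :
    ∀ (k : ℕ) {b b' : Lam}, Par b b' → Par (a.subst k b) (a'.subst k b') := by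
  induction ha with
  | var i =>
    intro k b b' hb; simp only [Lam.subst]
    split_ifs <;> first | exact hb | exact par_refl _
  | app _ _ iha ihb => intro k b b' hb; exact .app (iha k hb) (ihb k hb)
  | lam _ ih => intro k b b' hb; exact .lam (ih (k+1) (par_lift hb 0))
  | @beta p p' q q' _ _ ihp ihq =>
    intro k b b' hb
    have h2 : Par (Lam.app (Lam.lam (p.subst (k+1) (b.lift 0))) (q.subst k b))
        ((p'.subst (k+1) (b'.lift 0)).subst 0 (q'.subst k b')) :=
      .beta (ihp (k+1) (par_lift hb 0)) (ihq k hb)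
    simp only [Lam.subst]
    rw [subst_subst p' q' b' (Nat.zero_le k)]
    exact h2

theorem beta_par {a b : Lam} (h : Beta a b) : Par a b := by
  induction h with
  | head a u => exact .beta (par_refl a) (par_refl u)
  | appL b _ ih => exact .app ih (par_refl b)
  | appR a _ ih => exact .app (par_refl a) ih
  | lam _ ih => exact .lam ih

theorem betaStar_appL {a a' : Lam} (b : Lam) (h : BetaStar a a') :
    BetaStar (.app a b) (.app a' b) := by
  induction h with
  | refl => exact .refl
  | tail _ hstep ih => exact ih.tail (Beta.appL b hstep)

theorem betaStar_appR (a : Lam) {b b' : Lam} (h : BetaStar b b') :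
    BetaStar (.app a b) (.app a b') := by
  induction h with
  | refl => exact .refl
  | tail _ hstep ih => exact ih.tail (Beta.appR a hstep)

theorem betaStar_lam {a a' : Lam} (h : BetaStar a a') :
    BetaStar (.lam a) (.lam a') := by
  induction h with
  | refl => exact .refl
  | tail _ hstep ih => exact ih.tail (Beta.lam hstep)

theorem par_betaStar {a b : Lam} (h : Par a b) : BetaStar a b := by
  induction h with
  | var i => exact .refl
  | app _ _ iha ihb => exact .trans (betaStar_appL _ iha) (betaStar_appR _ ihb)
  | lam _ ih => exact betaStar_lam ih
  | @beta p p' q q' _ _ ihp ihq =>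
    have h1 : BetaStar (Lam.app (Lam.lam p) q) (Lam.app (Lam.lam p') q') :=
      .trans (betaStar_appL _ (betaStar_lam ihp)) (betaStar_appR _ ihq)
    exact h1.tail (Beta.head p' q')

theorem eta_lift {a b : Lam} (h : Eta a b) : ∀ d, Eta (a.lift d) (b.lift d) := by
  induction h with
  | head m =>
    intro d
    have e0 : ((Lam.var 0).lift (d+1)) = Lam.var 0 := by simp [Lam.lift]
    have e1 : (m.lift 0).lift (d+1) = (m.lift d).lift 0 := lift_lift m (Nat.zero_le d)
    show Eta (Lam.lam (Lam.app ((m.lift 0).lift (d+1)) ((Lam.var 0).lift (d+1)))) (m.lift d)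
    rw [e0, e1]; exact .head (m.lift d)
  | appL b _ ih => intro d; exact .appL _ (ih d)
  | appR a _ ih => intro d; exact .appR _ (ih d)
  | lam _ ih => intro d; exact .lam (ih (d+1))

theorem eta_subst_left {a b : Lam} (h : Eta a b) :
    ∀ (k : ℕ) (u : Lam), Eta (a.subst k u) (b.subst k u) := by
  induction h with
  | head m =>
    intro k u
    have e0 : ((Lam.var 0).subst (k+1) (u.lift 0)) = Lam.var 0 := by
      simp only [Lam.subst]; split_ifs <;> first | rfl | omega | simp_all
    have e1 : (m.lift 0).subst (k+1) (u.lift 0) = (m.subst k u).lift 0 :=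
      (lift_subst_le m u (Nat.zero_le k)).symm
    show Eta (Lam.lam (Lam.app ((m.lift 0).subst (k+1) (u.lift 0))
      ((Lam.var 0).subst (k+1) (u.lift 0)))) (m.subst k u)
    rw [e0, e1]; exact .head (m.subst k u)
  | appL b _ ih => intro k u; exact .appL _ (ih k u)
  | appR a _ ih => intro k u; exact .appR _ (ih k u)
  | lam _ ih => intro k u; exact .lam (ih (k+1) (u.lift 0))

theorem etaStar_appL {a a' : Lam} (b : Lam) (h : EtaStar a a') :
    EtaStar (.app a b) (.app a' b) := by
  induction h with
  | refl => exact .refl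
  | tail _ hstep ih => exact ih.tail (Eta.appL b hstep)

theorem etaStar_appR (a : Lam) {b b' : Lam} (h : EtaStar b b') :
    EtaStar (.app a b) (.app a b') := by
  induction h with
  | refl => exact .refl
  | tail _ hstep ih => exact ih.tail (Eta.appR a hstep)

theorem etaStar_lam {a a' : Lam} (h : EtaStar a a') :
    EtaStar (.lam a) (.lam a') := by
  induction h with
  | refl => exact .refl
  | tail _ hstep ih => exact ih.tail (Eta.lam hstep)

theorem etaStar_subst_left {a b : Lam} (h : EtaStar a b) (k : ℕ) (u : Lam) :
    EtaStar (a.subst k u) (b.subst k u) := by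
  induction h with
  | refl => exact .refl
  | tail _ hstep ih => exact ih.tail (eta_subst_left hstep k u)

theorem etaStar_subst_right (a : Lam) : ∀ (k : ℕ) {u v : Lam}, Eta u v →
    EtaStar (a.subst k u) (a.subst k v) := by
  induction a with
  | var i =>
    intro k u v huv; simp only [Lam.subst]
    split_ifs <;> first | exact Relation.ReflTransGen.single huv | exact .refl
  | app a b iha ihb =>
    intro k u v huv
    exact .trans (etaStar_appL _ (iha k huv)) (etaStar_appR _ (ihb k huv))
  | lam a ih =>
    intro k u v huv
    exact etaStar_lam (ih (k+1) (eta_lift huv 0))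

theorem etaStar_subst_right' (a : Lam) (k : ℕ) {u v : Lam} (h : EtaStar u v) :
    EtaStar (a.subst k u) (a.subst k v) := by
  induction h with
  | refl => exact .refl
  | tail _ hstep ih => exact ih.trans (etaStar_subst_right a k hstep)
theorem par_var_inv {i : ℕ} {x : Lam} (h : Par (.var i) x) : x = .var i := by
  cases h; rfl

theorem par_lam_inv {a x : Lam} (h : Par (.lam a) x) :
    ∃ a', x = .lam a' ∧ Par a a' := by
  cases h with | lam h => exact ⟨_, rfl, h⟩

theorem par_app_inv {a b x : Lam} (h : Par (.app a b) x) :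
    (∃ a' b', x = .app a' b' ∧ Par a a' ∧ Par b b') ∨
    (∃ p p' b', a = .lam p ∧ Par p p' ∧ Par b b' ∧ x = p'.subst 0 b') := by
  cases h with
  | app ha hb => exact .inl ⟨_, _, rfl, ha, hb⟩
  | beta hp hb => exact .inr ⟨_, _, _, rfl, hp, hb, rfl⟩

theorem eta_var_inv {i : ℕ} {x : Lam} (h : Eta (.var i) x) : False := by
  cases h

theorem eta_lam_inv {a0 c : Lam} (h : Eta (.lam a0) c) :
    (∃ c0, c = .lam c0 ∧ Eta a0 c0) ∨
    (∃ m : Lam, a0 = .app (m.lift 0) (.var 0) ∧ c = m) := by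
  cases h with
  | lam h => exact .inl ⟨_, rfl, h⟩
  | head m => exact .inr ⟨_, rfl, rfl⟩

theorem eta_app_inv {p q c : Lam} (h : Eta (.app p q) c) :
    (∃ p', c = .app p' q ∧ Eta p p') ∨ (∃ q', c = .app p q' ∧ Eta q q') := by
  cases h with
  | appL _ h => exact .inl ⟨_, rfl, h⟩
  | appR _ h => exact .inr ⟨_, rfl, h⟩

theorem lift_inj : ∀ (a : Lam) {b : Lam} (d : ℕ), a.lift d = b.lift d → a = b := by
  intro a
  induction a with
  | var i =>
    intro b d h
    cases b with
    | var j =>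
      simp only [Lam.lift] at h
      split_ifs at h <;> injection h with h <;> (congr 1 <;> omega)
    | app _ _ => simp only [Lam.lift] at h; split_ifs at h <;> cases h
    | lam _ => simp only [Lam.lift] at h; split_ifs at h <;> cases h
  | app a1 a2 ih1 ih2 =>
    intro b d h
    cases b with
    | var j => simp only [Lam.lift] at h; split_ifs at h <;> cases h
    | app b1 b2 =>
      simp only [Lam.lift] at h
      injection h with h1 h2
      rw [ih1 d h1, ih2 d h2]
    | lam _ => simp only [Lam.lift] at h; cases h
  | lam a0 ih =>
    intro b d h
    cases b with
    | var j => simp only [Lam.lift] at h; split_ifs at h <;> cases h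
    | app _ _ => simp only [Lam.lift] at h; cases h
    | lam b0 =>
      simp only [Lam.lift] at h
      injection h with h0
      rw [ih (d+1) h0]

theorem lift_swap_inv : ∀ (u : Lam) {M : Lam} {e d : ℕ}, e ≤ d →
    u.lift (d+1) = M.lift e → ∃ N : Lam, u = N.lift e ∧ M = N.lift d := by
  intro u
  induction u with
  | var i =>
    intro M e d hed heq
    cases M with
    | var j =>
      simp only [Lam.lift] at heq
      refine ⟨.var (if i < e then i else i - 1), ?_, ?_⟩ <;>
        · split_ifs at heq <;> injection heq with hji <;>
            (simp only [Lam.lift]; split_ifs <;> first | rfl | (congr 1; omega) | omega)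
    | app _ _ => simp only [Lam.lift] at heq; split_ifs at heq <;> cases heq
    | lam _ => simp only [Lam.lift] at heq; split_ifs at heq <;> cases heq
  | app a1 a2 ih1 ih2 =>
    intro M e d hed heq
    cases M with
    | var j => simp only [Lam.lift] at heq; split_ifs at heq <;> cases heq
    | lam _ => simp only [Lam.lift] at heq; cases heq
    | app M1 M2 =>
      simp only [Lam.lift] at heq
      injection heq with h1 h2
      obtain ⟨N1, e1, e1'⟩ := ih1 hed h1
      obtain ⟨N2, e2, e2'⟩ := ih2 hed h2
      exact ⟨.app N1 N2, by simp [Lam.lift, e1, e2], by simp [Lam.lift, e1', e2']⟩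
  | lam a0 ih =>
    intro M e d hed heq
    cases M with
    | var j => simp only [Lam.lift] at heq; split_ifs at heq <;> cases heq
    | app _ _ => simp only [Lam.lift] at heq; cases heq
    | lam M0 =>
      simp only [Lam.lift] at heq
      injection heq with h0
      obtain ⟨N0, e0, e0'⟩ := ih (by omega : e+1 ≤ d+1) h0
      exact ⟨.lam N0, by simp [Lam.lift, e0], by simp [Lam.lift, e0']⟩

theorem beta_lift_inv : ∀ {y x : Lam}, Beta y x → ∀ (a : Lam) (d : ℕ), y = a.lift d →
    ∃ b, x = b.lift d ∧ Beta a b := by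
  intro y x h
  induction h with
  | head P u =>
    intro a d heq
    cases a with
    | var i => simp only [Lam.lift] at heq; split_ifs at heq <;> cases heq
    | lam a0 => simp only [Lam.lift] at heq; cases heq
    | app a1 a2 =>
      simp only [Lam.lift] at heq
      injection heq with h1 h2
      cases a1 with
      | var i => simp only [Lam.lift] at h1; split_ifs at h1 <;> cases h1
      | app _ _ => simp only [Lam.lift] at h1; cases h1
      | lam a0 =>
        simp only [Lam.lift] at h1
        injection h1 with h1
        refine ⟨a0.subst 0 a2, ?_, .head a0 a2⟩
        rw [lift_subst_ge a0 a2 (Nat.zero_le d), ← h1, ← h2]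
  | @appL p p' q _ ih =>
    intro a d heq
    cases a with
    | var i => simp only [Lam.lift] at heq; split_ifs at heq <;> cases heq
    | lam a0 => simp only [Lam.lift] at heq; cases heq
    | app a1 a2 =>
      simp only [Lam.lift] at heq
      injection heq with h1 h2
      obtain ⟨b1, e1, hb1⟩ := ih a1 d h1
      exact ⟨.app b1 a2, by simp [Lam.lift, e1, h2], .appL a2 hb1⟩
  | @appR p q q' _ ih =>
    intro a d heq
    cases a with
    | var i => simp only [Lam.lift] at heq; split_ifs at heq <;> cases heq
    | lam a0 => simp only [Lam.lift] at heq; cases heq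
    | app a1 a2 =>
      simp only [Lam.lift] at heq
      injection heq with h1 h2
      obtain ⟨b2, e2, hb2⟩ := ih a2 d h2
      exact ⟨.app a1 b2, by simp [Lam.lift, e2, h1], .appR a1 hb2⟩
  | @lam p p' _ ih =>
    intro a d heq
    cases a with
    | var i => simp only [Lam.lift] at heq; split_ifs at heq <;> cases heq
    | app _ _ => simp only [Lam.lift] at heq; cases heq
    | lam a0 =>
      simp only [Lam.lift] at heq
      injection heq with h0
      obtain ⟨b0, e0, hb0⟩ := ih a0 (d+1) h0
      exact ⟨.lam b0, by simp [Lam.lift, e0], .lam hb0⟩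

theorem par_lift_inv : ∀ {y x : Lam}, Par y x → ∀ (a : Lam) (d : ℕ), y = a.lift d →
    ∃ b, x = b.lift d ∧ Par a b := by
  intro y x h
  induction h with
  | var i => intro a d heq; exact ⟨a, heq, par_refl a⟩
  | @app p p' q q' _ _ ihp ihq =>
    intro a d heq
    cases a with
    | var i => simp only [Lam.lift] at heq; split_ifs at heq <;> cases heq
    | lam a0 => simp only [Lam.lift] at heq; cases heq
    | app a1 a2 =>
      simp only [Lam.lift] at heq
      injection heq with h1 h2
      obtain ⟨b1, e1, hb1⟩ := ihp a1 d h1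
      obtain ⟨b2, e2, hb2⟩ := ihq a2 d h2
      exact ⟨.app b1 b2, by simp [Lam.lift, e1, e2], .app hb1 hb2⟩
  | @lam p p' _ ih =>
    intro a d heq
    cases a with
    | var i => simp only [Lam.lift] at heq; split_ifs at heq <;> cases heq
    | app _ _ => simp only [Lam.lift] at heq; cases heq
    | lam a0 =>
      simp only [Lam.lift] at heq
      injection heq with h0
      obtain ⟨b0, e0, hb0⟩ := ih a0 (d+1) h0
      exact ⟨.lam b0, by simp [Lam.lift, e0], .lam hb0⟩
  | @beta p p' q q' _ _ ihp ihq =>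
    intro a d heq
    cases a with
    | var i => simp only [Lam.lift] at heq; split_ifs at heq <;> cases heq
    | lam a0 => simp only [Lam.lift] at heq; cases heq
    | app a1 a2 =>
      simp only [Lam.lift] at heq
      injection heq with h1 h2
      cases a1 with
      | var i => simp only [Lam.lift] at h1; split_ifs at h1 <;> cases h1
      | app _ _ => simp only [Lam.lift] at h1; cases h1
      | lam a0 =>
        simp only [Lam.lift] at h1
        injection h1 with h1
        obtain ⟨b0, e0, hb0⟩ := ihp a0 (d+1) h1
        obtain ⟨b2, e2, hb2⟩ := ihq a2 d h2
        refine ⟨b0.subst 0 b2, ?_, .beta hb0 hb2⟩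
        rw [e0, e2, lift_subst_ge b0 b2 (Nat.zero_le d)]
  
theorem eta_lift_inv : ∀ {y x : Lam}, Eta y x → ∀ (a : Lam) (d : ℕ), y = a.lift d →
    ∃ b, x = b.lift d ∧ Eta a b := by
  intro y x h
  induction h with
  | head m =>
    intro a d heq
    cases a with
    | var i => simp only [Lam.lift] at heq; split_ifs at heq <;> cases heq
    | app _ _ => simp only [Lam.lift] at heq; cases heq
    | lam a0 =>
      simp only [Lam.lift] at heq
      injection heq with h0
      cases a0 with
      | var i => simp only [Lam.lift] at h0; split_ifs at h0 <;> cases h0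
      | lam _ => simp only [Lam.lift] at h0; cases h0
      | app p q =>
        simp only [Lam.lift] at h0
        injection h0 with h1 h2
        have hq : q = .var 0 := by
          cases q with
          | var j =>
            simp only [Lam.lift] at h2; split_ifs at h2 <;>
              injection h2 with h2 <;> (congr 1 <;> omega)
          | app _ _ => simp only [Lam.lift] at h2; cases h2
          | lam _ => simp only [Lam.lift] at h2; cases h2
        obtain ⟨N, eN, eN'⟩ := lift_swap_inv p (Nat.zero_le d) h1.symm
        refine ⟨N, eN', ?_⟩
        rw [hq, eN]
        exact .head N
  | @appL p p' q _ ih =>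
    intro a d heq
    cases a with
    | var i => simp only [Lam.lift] at heq; split_ifs at heq <;> cases heq
    | lam a0 => simp only [Lam.lift] at heq; cases heq
    | app a1 a2 =>
      simp only [Lam.lift] at heq
      injection heq with h1 h2
      obtain ⟨b1, e1, hb1⟩ := ih a1 d h1
      exact ⟨.app b1 a2, by simp [Lam.lift, e1, h2], .appL a2 hb1⟩
  | @appR p q q' _ ih =>
    intro a d heq
    cases a with
    | var i => simp only [Lam.lift] at heq; split_ifs at heq <;> cases heq
    | lam a0 => simp only [Lam.lift] at heq; cases heq
    | app a1 a2 =>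
      simp only [Lam.lift] at heq
      injection heq with h1 h2
      obtain ⟨b2, e2, hb2⟩ := ih a2 d h2
      exact ⟨.app a1 b2, by simp [Lam.lift, e2, h1], .appR a1 hb2⟩
  | @lam p p' _ ih =>
    intro a d heq
    cases a with
    | var i => simp only [Lam.lift] at heq; split_ifs at heq <;> cases heq
    | app _ _ => simp only [Lam.lift] at heq; cases heq
    | lam a0 =>
      simp only [Lam.lift] at heq
      injection heq with h0
      obtain ⟨b0, e0, hb0⟩ := ih a0 (d+1) h0
      exact ⟨.lam b0, by simp [Lam.lift, e0], .lam hb0⟩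
def dev : Lam → Lam
| .var i => .var i
| .app (.lam a) b => (dev a).subst 0 (dev b)
| .app (.var i) b => .app (.var i) (dev b)
| .app (.app x y) b => .app (dev (.app x y)) (dev b)
| .lam a => .lam (dev a)

theorem par_dev {a b : Lam} (h : Par a b) : Par b (dev a) := by
  induction h with
  | var i => exact .var i
  | @app p p' q q' hp hq ihp ihq =>
    cases p with
    | var i =>
      have : p' = .var i := par_var_inv hp
      subst this
      exact .app (par_refl _) ihq
    | app x y =>
      exact .app ihp ihq
    | lam p0 =>
      obtain ⟨p0', rfl, hp0⟩ := par_lam_inv hp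
      have ih0 : Par (Lam.lam p0') (Lam.lam (dev p0)) := ihp
      obtain ⟨z, hz, hz0⟩ := par_lam_inv ih0
      have hzz : dev p0 = z := by injection hz
      obtain rfl := hzz.symm
      exact .beta hz0 ihq
  | lam _ ih => exact .lam ih
  | @beta p p' q q' hp hq ihp ihq =>
    exact par_subst ihp 0 ihq

theorem par_diamond {a b c : Lam} (hab : Par a b) (hac : Par a c) :
    ∃ d, Par b d ∧ Par c d := ⟨dev a, par_dev hab, par_dev hac⟩

theorem reflGen_eta_appL {a a' : Lam} (b : Lam) (h : Relation.ReflGen Eta a a') :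
    Relation.ReflGen Eta (.app a b) (.app a' b) := by
  cases h with
  | refl => exact .refl
  | single h => exact .single (.appL b h)

theorem reflGen_eta_appR (a : Lam) {b b' : Lam} (h : Relation.ReflGen Eta b b') :
    Relation.ReflGen Eta (.app a b) (.app a b') := by
  cases h with
  | refl => exact .refl
  | single h => exact .single (.appR a h)

theorem reflGen_eta_lam {a a' : Lam} (h : Relation.ReflGen Eta a a') :
    Relation.ReflGen Eta (.lam a) (.lam a') := by
  cases h with
  | refl => exact .refl
  | single h => exact .single (.lam h)

/-- Local (strong) confluence of one-step eta. -/
theorem eta_strong : ∀ {a b c : Lam}, Eta a b → Eta a c →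
    ∃ d, Relation.ReflGen Eta b d ∧ Relation.ReflGen Eta c d := by
  intro a b c hab
  induction hab generalizing c with
  | head m =>
    intro hac
    rcases eta_lam_inv hac with ⟨c0, rfl, h0⟩ | ⟨m2, hm2, hcm⟩
    · rcases eta_app_inv h0 with ⟨p', rfl, hp⟩ | ⟨q', rfl, hq⟩
      · obtain ⟨m1, rfl, hm1⟩ := eta_lift_inv hp m 0 rfl
        exact ⟨m1, .single hm1, .single (.head m1)⟩
      · exact absurd hq (fun h => eta_var_inv h)
    · subst hcm
      injection hm2 with h1 h2
      obtain rfl := lift_inj m 0 h1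
      exact ⟨_, .refl, .refl⟩
  | @appL p p' q hp ih =>
    intro hac
    rcases eta_app_inv hac with ⟨p'', rfl, hp2⟩ | ⟨q', rfl, hq⟩
    · obtain ⟨d1, r1, r2⟩ := ih hp2
      exact ⟨.app d1 q, reflGen_eta_appL q r1, reflGen_eta_appL q r2⟩
    · exact ⟨.app p' q', .single (.appR _ hq), .single (.appL _ hp)⟩
  | @appR p q q' hq ih =>
    intro hac
    rcases eta_app_inv hac with ⟨p', rfl, hp⟩ | ⟨q'', rfl, hq2⟩
    · exact ⟨.app p' q', .single (.appL _ hp), .single (.appR _ hq)⟩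
    · obtain ⟨d2, r1, r2⟩ := ih hq2
      exact ⟨.app p d2, reflGen_eta_appR p r1, reflGen_eta_appR p r2⟩
  | @lam a0 b0 h0 ih =>
    intro hac
    rcases eta_lam_inv hac with ⟨c0, rfl, hc0⟩ | ⟨m, hm, hcm⟩
    · obtain ⟨d0, r1, r2⟩ := ih hc0
      exact ⟨.lam d0, reflGen_eta_lam r1, reflGen_eta_lam r2⟩
    · subst hcm
      subst hm
      rcases eta_app_inv h0 with ⟨p', rfl, hp⟩ | ⟨q', rfl, hq⟩
      · obtain ⟨m1, rfl, hm1⟩ := eta_lift_inv hp _ 0 rfl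
        exact ⟨m1, .single (.head m1), .single hm1⟩
      · exact absurd hq (fun h => eta_var_inv h)

theorem eta_to_lam_inv {a1 P : Lam} (h : Eta a1 (.lam P)) :
    (∃ a0, a1 = .lam a0 ∧ Eta a0 P) ∨ (a1 = .lam (.app ((Lam.lam P).lift 0) (.var 0))) := by
  cases h with
  | lam h => exact .inl ⟨_, rfl, h⟩
  | head => exact .inr rfl

/-- Commutation: if a η-steps to b and parallel-β-steps to c, then there is d with
b parallel-β-stepping to d and c η-reducing to d. -/
theorem eta_par_comm {a c : Lam} (hac : Par a c) :
    ∀ {b : Lam}, Eta a b → ∃ d, Par b d ∧ EtaStar c d := by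
  induction hac with
  | var i => intro b hab; exact absurd hab (fun h => eta_var_inv h)
  | @app p p' q q' hp hq ihp ihq =>
    intro b hab
    cases hab with
    | appL _ h1 =>
      obtain ⟨d1, hd1, hd2⟩ := ihp h1
      exact ⟨.app d1 q', .app hd1 hq, etaStar_appL q' hd2⟩
    | appR _ h2 =>
      obtain ⟨d2, hd1, hd2⟩ := ihq h2
      exact ⟨.app p' d2, .app hp hd1, etaStar_appR p' hd2⟩
  | @lam a0 c0 h0 ih =>
    intro b hab
    cases hab with
    | lam h1 =>
      obtain ⟨d0, hd1, hd2⟩ := ih h1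
      exact ⟨.lam d0, .lam hd1, etaStar_lam hd2⟩
    | head =>
      rcases par_app_inv h0 with ⟨z, w, rfl, hz, hw⟩ | ⟨R, R1, w, hR, hR1, hw, rfl⟩
      · have hwv : w = .var 0 := par_var_inv hw
        subst hwv
        obtain ⟨m', rfl, hm'⟩ := par_lift_inv hz b 0 rfl
        exact ⟨m', hm', Relation.ReflTransGen.single (.head m')⟩
      · cases b with
        | var i => simp only [Lam.lift] at hR; split_ifs at hR <;> cases hR
        | app _ _ => simp only [Lam.lift] at hR; cases hR
        | lam m0 =>
          simp only [Lam.lift] at hR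
          injection hR with hR
          obtain ⟨m1, rfl, hm1⟩ := par_lift_inv hR1 m0 1 hR.symm
          have hwv : w = .var 0 := par_var_inv hw
          subst hwv
          rw [subst_lift_succ m1 0]
          exact ⟨.lam m1, .lam hm1, .refl⟩
  | @beta P P' q q' hP hq ihP ihq =>
    intro b hab
    cases hab with
    | appL _ h1 =>
      -- h1 : Eta (lam P) a1', b = app a1' q
      rcases eta_lam_inv h1 with ⟨P2, rfl, hP2⟩ | ⟨m, hm, hcm⟩
      · obtain ⟨D, hD, hDs⟩ := ihP hP2
        exact ⟨D.subst 0 q', .beta hD hq, etaStar_subst_left hDs 0 q'⟩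
      · -- P = app (m.lift 0) (var 0), b = app m q
        have hcm2 := hcm.symm
        subst hcm2
        subst hm
        rcases par_app_inv hP with ⟨z, w, rfl, hz, hw⟩ | ⟨R, R1, w, hR, hR1, hw, rfl⟩
        · have hwv : w = .var 0 := par_var_inv hw
          subst hwv
          obtain ⟨m', rfl, hm'⟩ := par_lift_inv hz m 0 rfl
          refine ⟨.app m' q', .app hm' hq, ?_⟩
          have e1 : (Lam.app (m'.lift 0) (Lam.var 0)).subst 0 q' = .app m' q' := by
            simp [Lam.subst, subst_lift]
          rw [e1]
          exact .refl
        · cases m with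
          | var i => simp only [Lam.lift] at hR; split_ifs at hR <;> cases hR
          | app _ _ => simp only [Lam.lift] at hR; cases hR
          | lam m0 =>
            simp only [Lam.lift] at hR
            injection hR with hR
            obtain ⟨m1, rfl, hm1⟩ := par_lift_inv hR1 m0 1 hR.symm
            have hwv : w = .var 0 := par_var_inv hw
            subst hwv
            rw [subst_lift_succ m1 0]
            exact ⟨m1.subst 0 q', .beta hm1 hq, .refl⟩
    | appR _ h2 =>
      obtain ⟨D, hD, hDs⟩ := ihq h2
      exact ⟨P'.subst 0 D, .beta hP hD, etaStar_subst_right' P' 0 hDs⟩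

/-- Postponement core: if a η-steps to b and b parallel-β-steps to c, then a
parallel-β-steps to some d which η-reduces to c. -/
theorem eta_par_post {b c : Lam} (hbc : Par b c) :
    ∀ {a : Lam}, Eta a b → ∃ d, Par a d ∧ EtaStar d c := by
  induction hbc with
  | var i =>
    intro a hab
    cases hab with
    | head =>
      exact ⟨_, .lam (.app (par_lift (par_refl _) 0) (.var 0)),
        Relation.ReflTransGen.single (.head _)⟩
  | @app p p' q q' hp hq ihp ihq =>
    intro a hab
    cases hab with
    | head =>
      exact ⟨.lam (.app ((Lam.app p' q').lift 0) (.var 0)),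
        .lam (.app (par_lift (.app hp hq) 0) (.var 0)),
        Relation.ReflTransGen.single (.head _)⟩
    | appL _ h1 =>
      obtain ⟨d1, hd1, hd2⟩ := ihp h1
      exact ⟨.app d1 q', .app hd1 hq, etaStar_appL q' hd2⟩
    | appR _ h2 =>
      obtain ⟨d2, hd1, hd2⟩ := ihq h2
      exact ⟨.app p' d2, .app hp hd1, etaStar_appR p' hd2⟩
  | @lam b0 c0 h0 ih =>
    intro a hab
    cases hab with
    | head =>
      exact ⟨.lam (.app ((Lam.lam c0).lift 0) (.var 0)),
        .lam (.app (par_lift (.lam h0) 0) (.var 0)),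
        Relation.ReflTransGen.single (.head _)⟩
    | lam h1 =>
      obtain ⟨d0, hd1, hd2⟩ := ih h1
      exact ⟨.lam d0, .lam hd1, etaStar_lam hd2⟩
  | @beta P P' q q' hP hq ihP ihq =>
    intro a hab
    cases hab with
    | head =>
      exact ⟨.lam (.app ((P'.subst 0 q').lift 0) (.var 0)),
        .lam (.app (par_lift (.beta hP hq) 0) (.var 0)),
        Relation.ReflTransGen.single (.head _)⟩
    | appL _ h1 =>
      -- h1 : Eta a1 (lam P), a = app a1 q
      rcases eta_to_lam_inv h1 with ⟨a0, rfl, h0⟩ | rfl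
      · obtain ⟨D, hD, hDs⟩ := ihP h0
        exact ⟨D.subst 0 q', .beta hD hq, etaStar_subst_left hDs 0 q'⟩
      · refine ⟨P'.subst 0 q', ?_, .refl⟩
        have hbody : Par (Lam.app ((Lam.lam P).lift 0) (Lam.var 0)) P' := by
          have h2 : Par (Lam.app (Lam.lam (P.lift 1)) (Lam.var 0))
              ((P'.lift 1).subst 0 (Lam.var 0)) := .beta (par_lift hP 1) (.var 0)
          rw [subst_lift_succ P' 0] at h2
          simpa [Lam.lift] using h2
        exact .beta hbody hq
    | appR _ h2 =>
      obtain ⟨D, hD, hDs⟩ := ihq h2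
      exact ⟨P'.subst 0 D, .beta hP hD, etaStar_subst_right' P' 0 hDs⟩
def ParStar : Lam → Lam → Prop := Relation.ReflTransGen Par

theorem etaStar_par_comm {a b : Lam} (h : EtaStar a b) :
    ∀ {c : Lam}, Par a c → ∃ d, Par b d ∧ EtaStar c d := by
  induction h using Relation.ReflTransGen.head_induction_on with
  | refl => intro c hc; exact ⟨c, hc, .refl⟩
  | head hstep _ ih =>
    intro c hac
    obtain ⟨e, he1, he2⟩ := eta_par_comm hac hstep
    obtain ⟨d, hd1, hd2⟩ := ih he1
    exact ⟨d, hd1, he2.trans hd2⟩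

theorem etaStar_parStar_comm {a c : Lam} (h : ParStar a c) :
    ∀ {b : Lam}, EtaStar a b → ∃ d, ParStar b d ∧ EtaStar c d := by
  induction h using Relation.ReflTransGen.head_induction_on with
  | refl => intro b hb; exact ⟨b, .refl, hb⟩
  | head hstep _ ih =>
    intro b hb
    obtain ⟨d1, hd1, hd2⟩ := etaStar_par_comm hb hstep
    obtain ⟨d, h1, h2⟩ := ih hd2
    exact ⟨d, .head hd1 h1, h2⟩

theorem etaStar_par_post {a b : Lam} (h : EtaStar a b) :
    ∀ {c : Lam}, Par b c → ∃ d, Par a d ∧ EtaStar d c := by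
  induction h using Relation.ReflTransGen.head_induction_on with
  | refl => intro c hbc; exact ⟨c, hbc, .refl⟩
  | head hstep _ ih =>
    intro c hbc
    obtain ⟨d1, hd1, hd2⟩ := ih hbc
    obtain ⟨e, he1, he2⟩ := eta_par_post hd1 hstep
    exact ⟨e, he1, he2.trans hd2⟩

theorem etaStar_parStar_post {b c : Lam} (hbc : ParStar b c) :
    ∀ {a : Lam}, EtaStar a b → ∃ d, ParStar a d ∧ EtaStar d c := by
  induction hbc using Relation.ReflTransGen.head_induction_on with
  | refl => intro a h; exact ⟨a, .refl, h⟩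
  | head hstep _ ih =>
    intro a h
    obtain ⟨d1, hd1, hd2⟩ := etaStar_par_post h hstep
    obtain ⟨d, h1, h2⟩ := ih hd2
    exact ⟨d, .head hd1 h1, h2⟩

def Mix (x y : Lam) : Prop := Par x y ∨ Eta x y

theorem mixStar_decomp {t u : Lam} (h : Relation.ReflTransGen Mix t u) :
    ∃ v, ParStar t v ∧ EtaStar v u := by
  induction h using Relation.ReflTransGen.head_induction_on with
  | refl => exact ⟨_, .refl, .refl⟩
  | head hstep _ ih =>
    obtain ⟨v, h1, h2⟩ := ih
    cases hstep with
    | inl hp => exact ⟨v, .head hp h1, h2⟩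
    | inr he =>
      obtain ⟨d, hd1, hd2⟩ := etaStar_parStar_post h1 (Relation.ReflTransGen.single he)
      exact ⟨d, hd1, hd2.trans h2⟩

section generic
variable {α : Type*} {r : α → α → Prop}

theorem rtg_strip (hdia : ∀ {a b c : α}, r a b → r a c → ∃ d, r b d ∧ r c d)
    {a c : α} (h : Relation.ReflTransGen r a c) :
    ∀ {b : α}, r a b → ∃ d, Relation.ReflTransGen r b d ∧ r c d := by
  induction h with
  | refl => intro b hb; exact ⟨b, .refl, hb⟩
  | tail _ hstep ih =>
    intro b hb
    obtain ⟨d', h1, h2⟩ := ih hb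
    obtain ⟨e, he1, he2⟩ := hdia hstep h2
    exact ⟨e, h1.tail he2, he1⟩

theorem rtg_diamond (hdia : ∀ {a b c : α}, r a b → r a c → ∃ d, r b d ∧ r c d)
    {a b c : α} (hab : Relation.ReflTransGen r a b) (hac : Relation.ReflTransGen r a c) :
    ∃ d, Relation.ReflTransGen r b d ∧ Relation.ReflTransGen r c d := by
  induction hab with
  | refl => exact ⟨c, hac, .refl⟩
  | tail _ hstep ih =>
    obtain ⟨d, h1, h2⟩ := ih
    obtain ⟨e, he1, he2⟩ := rtg_strip hdia h1 hstep
    exact ⟨e, he1, h2.tail he2⟩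

theorem rtg_reflGen {a b : α} (h : Relation.ReflTransGen (Relation.ReflGen r) a b) :
    Relation.ReflTransGen r a b := by
  induction h with
  | refl => exact .refl
  | tail _ hstep ih =>
    cases hstep with
    | refl => exact ih
    | single h => exact ih.tail h

theorem rtg_rtg {a b : α} (h : Relation.ReflTransGen (Relation.ReflTransGen r) a b) :
    Relation.ReflTransGen r a b := by
  induction h with
  | refl => exact .refl
  | tail _ hstep ih => exact ih.trans hstep

end generic

theorem parStar_diamond {a b c : Lam} (hab : ParStar a b) (hac : ParStar a c) :
    ∃ d, ParStar b d ∧ ParStar c d :=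
  rtg_diamond (fun h1 h2 => par_diamond h1 h2) hab hac

theorem reflGen_eta_diamond {a b c : Lam} (hab : Relation.ReflGen Eta a b)
    (hac : Relation.ReflGen Eta a c) :
    ∃ d, Relation.ReflGen Eta b d ∧ Relation.ReflGen Eta c d := by
  cases hab with
  | refl => exact ⟨c, hac, .refl⟩
  | single h1 =>
    cases hac with
    | refl => exact ⟨b, .refl, .single h1⟩
    | single h2 => exact eta_strong h1 h2

theorem etaStar_diamond {a b c : Lam} (hab : EtaStar a b) (hac : EtaStar a c) :
    ∃ d, EtaStar b d ∧ EtaStar c d := by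
  have hab' : Relation.ReflTransGen (Relation.ReflGen Eta) a b :=
    Relation.ReflTransGen.mono (fun _ _ h => .single h) _ _ hab
  have hac' : Relation.ReflTransGen (Relation.ReflGen Eta) a c :=
    Relation.ReflTransGen.mono (fun _ _ h => .single h) _ _ hac
  obtain ⟨d, h1, h2⟩ := rtg_diamond (fun h1 h2 => reflGen_eta_diamond h1 h2) hab' hac'
  exact ⟨d, rtg_reflGen h1, rtg_reflGen h2⟩

/-- The union relation (at the level of stars). -/
def SRel (x y : Lam) : Prop := ParStar x y ∨ EtaStar x y

theorem srel_diamond {a b c : Lam} (hab : SRel a b) (hac : SRel a c) :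
    ∃ d, SRel b d ∧ SRel c d := by
  cases hab with
  | inl hp =>
    cases hac with
    | inl hp2 =>
      obtain ⟨d, h1, h2⟩ := parStar_diamond hp hp2
      exact ⟨d, .inl h1, .inl h2⟩
    | inr he =>
      obtain ⟨d, h1, h2⟩ := etaStar_parStar_comm hp he
      exact ⟨d, .inr h2, .inl h1⟩
  | inr he =>
    cases hac with
    | inl hp =>
      obtain ⟨d, h1, h2⟩ := etaStar_parStar_comm hp he
      exact ⟨d, .inl h1, .inr h2⟩
    | inr he2 =>
      obtain ⟨d, h1, h2⟩ := etaStar_diamond he he2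
      exact ⟨d, .inr h1, .inr h2⟩

theorem srelStar_eq_mixStar {a b : Lam} :
    Relation.ReflTransGen SRel a b ↔ Relation.ReflTransGen Mix a b := by
  constructor
  · intro h
    have : Relation.ReflTransGen (Relation.ReflTransGen Mix) a b := by
      refine Relation.ReflTransGen.mono ?_ _ _ h
      intro x y hxy
      cases hxy with
      | inl hp => exact Relation.ReflTransGen.mono (fun _ _ h => Or.inl h) _ _ hp
      | inr he => exact Relation.ReflTransGen.mono (fun _ _ h => Or.inr h) _ _ he
    exact rtg_rtg this
  · intro h
    refine Relation.ReflTransGen.mono ?_ _ _ h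
    intro x y hxy
    cases hxy with
    | inl hp => exact .inl (.single hp)
    | inr he => exact .inr (.single he)

theorem mixStar_diamond {a b c : Lam} (hab : Relation.ReflTransGen Mix a b)
    (hac : Relation.ReflTransGen Mix a c) :
    ∃ d, Relation.ReflTransGen Mix b d ∧ Relation.ReflTransGen Mix c d := by
  obtain ⟨d, h1, h2⟩ := rtg_diamond (fun h1 h2 => srel_diamond h1 h2)
    (srelStar_eq_mixStar.mpr hab) (srelStar_eq_mixStar.mpr hac)
  exact ⟨d, srelStar_eq_mixStar.mp h1, srelStar_eq_mixStar.mp h2⟩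

theorem mix_cr {t s : Lam} (h : Relation.EqvGen Mix t s) :
    ∃ u, Relation.ReflTransGen Mix t u ∧ Relation.ReflTransGen Mix s u := by
  induction h with
  | rel x y hxy => exact ⟨y, .single hxy, .refl⟩
  | refl x => exact ⟨x, .refl, .refl⟩
  | symm x y _ ih => obtain ⟨u, h1, h2⟩ := ih; exact ⟨u, h2, h1⟩
  | trans x y z _ _ ih1 ih2 =>
    obtain ⟨u, h1, h2⟩ := ih1
    obtain ⟨v, h3, h4⟩ := ih2
    obtain ⟨w, h5, h6⟩ := mixStar_diamond h2 h3
    exact ⟨w, h1.trans h5, h4.trans h6⟩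
theorem fv_lift_mem (t : Lam) : ∀ (d i : ℕ), i ∈ (t.lift d).FV ↔
    ((i < d ∧ i ∈ t.FV) ∨ (d < i ∧ i - 1 ∈ t.FV)) := by
  induction t with
  | var j =>
    intro d i
    simp only [Lam.lift]
    split_ifs with h <;> simp only [Lam.FV, Set.mem_singleton_iff] <;> omega
  | app a b iha ihb =>
    intro d i
    simp only [Lam.lift, Lam.FV, Set.mem_union, iha, ihb]
    tauto
  | lam a ih =>
    intro d i
    simp only [Lam.lift, Lam.FV, Set.mem_setOf_eq, ih (d+1) (i+1)]
    constructor
    · rintro (⟨h1, h2⟩ | ⟨h1, h2⟩)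
      · exact .inl ⟨by omega, h2⟩
      · right
        refine ⟨by omega, ?_⟩
        have e : i - 1 + 1 = i + 1 - 1 := by omega
        rw [e]; exact h2
    · rintro (⟨h1, h2⟩ | ⟨h1, h2⟩)
      · exact .inl ⟨by omega, h2⟩
      · right
        refine ⟨by omega, ?_⟩
        have e : i + 1 - 1 = i - 1 + 1 := by omega
        rw [e]; exact h2

theorem fv_subst_mem (a : Lam) : ∀ (k : ℕ) (u : Lam) (i : ℕ),
    i ∈ (a.subst k u).FV →
    (i < k ∧ i ∈ a.FV) ∨ (k ≤ i ∧ i + 1 ∈ a.FV) ∨ (k ∈ a.FV ∧ i ∈ u.FV) := by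
  induction a with
  | var j =>
    intro k u i h
    simp only [Lam.subst] at h
    split_ifs at h with h1 h2
    · subst h1; exact .inr (.inr ⟨rfl, h⟩)
    · simp only [Lam.FV, Set.mem_singleton_iff] at h ⊢
      subst h; right; left; constructor <;> omega
    · simp only [Lam.FV, Set.mem_singleton_iff] at h ⊢
      subst h; left; constructor <;> omega
  | app a b iha ihb =>
    intro k u i h
    simp only [Lam.subst, Lam.FV, Set.mem_union] at h ⊢
    rcases h with h | h
    · rcases iha k u i h with ⟨h1, h2⟩ | ⟨h1, h2⟩ | ⟨h1, h2⟩
      · exact .inl ⟨h1, .inl h2⟩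
      · exact .inr (.inl ⟨h1, .inl h2⟩)
      · exact .inr (.inr ⟨.inl h1, h2⟩)
    · rcases ihb k u i h with ⟨h1, h2⟩ | ⟨h1, h2⟩ | ⟨h1, h2⟩
      · exact .inl ⟨h1, .inr h2⟩
      · exact .inr (.inl ⟨h1, .inr h2⟩)
      · exact .inr (.inr ⟨.inr h1, h2⟩)
  | lam a ih =>
    intro k u i h
    simp only [Lam.subst, Lam.FV, Set.mem_setOf_eq] at h ⊢
    rcases ih (k+1) (u.lift 0) (i+1) h with ⟨h1, h2⟩ | ⟨h1, h2⟩ | ⟨h1, h2⟩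
    · exact .inl ⟨by omega, h2⟩
    · exact .inr (.inl ⟨by omega, h2⟩)
    · right; right
      refine ⟨h1, ?_⟩
      rcases (fv_lift_mem u 0 (i+1)).mp h2 with ⟨h3, _⟩ | ⟨_, h4⟩
      · omega
      · simpa using h4

theorem fv_par {a b : Lam} (h : Par a b) : b.FV ⊆ a.FV := by
  induction h with
  | var i => exact le_refl _
  | app _ _ iha ihb =>
    intro i hi
    simp only [Lam.FV, Set.mem_union] at hi ⊢
    rcases hi with hi | hi
    · exact .inl (iha hi)
    · exact .inr (ihb hi)
  | lam _ ih =>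
    intro i hi
    simp only [Lam.FV, Set.mem_setOf_eq] at hi ⊢
    exact ih hi
  | @beta p p' q q' _ _ ihp ihq =>
    intro i hi
    simp only [Lam.FV, Set.mem_union, Set.mem_setOf_eq]
    rcases fv_subst_mem p' 0 q' i hi with ⟨h1, _⟩ | ⟨_, h2⟩ | ⟨_, h2⟩
    · omega
    · exact .inl (ihp h2)
    · exact .inr (ihq h2)

theorem fv_eta_eq {a b : Lam} (h : Eta a b) : a.FV = b.FV := by
  induction h with
  | head m =>
    ext i
    simp only [Lam.FV, Set.mem_setOf_eq, Set.mem_union, Set.mem_singleton_iff,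
      fv_lift_mem m 0 (i+1)]
    constructor
    · rintro ((⟨h1, _⟩ | ⟨_, h2⟩) | h3)
      · omega
      · simpa using h2
      · omega
    · intro hi
      left; right
      refine ⟨by omega, ?_⟩
      simpa using hi
  | appL b _ ih => simp only [Lam.FV, ih]
  | appR a _ ih => simp only [Lam.FV, ih]
  | lam _ ih => simp only [Lam.FV, ih]

theorem fv_etaStar_eq {a b : Lam} (h : EtaStar a b) : a.FV = b.FV := by
  induction h with
  | refl => rfl
  | tail _ hstep ih => rw [ih, fv_eta_eq hstep]

theorem fv_mixStar {a b : Lam} (h : Relation.ReflTransGen Mix a b) : b.FV ⊆ a.FV := by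
  induction h with
  | refl => exact le_refl _
  | tail _ hstep ih =>
    refine le_trans ?_ ih
    cases hstep with
    | inl hp => exact fv_par hp
    | inr he => rw [fv_eta_eq he]

theorem parStar_betaEqv {a b : Lam} (h : ParStar a b) : BetaEqv a b := by
  induction h with
  | refl => exact Relation.EqvGen.refl a
  | tail _ hstep ih =>
    refine Relation.EqvGen.trans _ _ _ ih ?_
    have hb : BetaStar _ _ := par_betaStar hstep
    clear hstep ih
    induction hb with
    | refl => exact Relation.EqvGen.refl _
    | tail _ hstep2 ih2 =>
      exact Relation.EqvGen.trans _ _ _ ih2 (Relation.EqvGen.rel _ _ hstep2)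

/-- If `t` is beta-eta-equivalent to a closed term, then `t` is beta-equivalent
to a closed term. -/
theorem betaEqv_closed_of_betaEtaEqv_closed (t s : Lam) (h : BetaEtaEqv t s)
    (hs : Closed s) : ∃ s' : Lam, BetaEqv t s' ∧ Closed s' := by
  have hmix : Relation.EqvGen Mix t s := by
    refine Relation.EqvGen.mono ?_ _ _ h
    intro x y hxy
    cases hxy with
    | inl hb => exact .inl (beta_par hb)
    | inr he => exact .inr he
  obtain ⟨u, htu, hsu⟩ := mix_cr hmix
  obtain ⟨v, hv1, hv2⟩ := mixStar_decomp htu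
  refine ⟨v, parStar_betaEqv hv1, ?_⟩
  have h1 : u.FV ⊆ s.FV := fv_mixStar hsu
  have h2 : v.FV = u.FV := fv_etaStar_eq hv2
  unfold Closed at hs ⊢
  rw [h2]
  rw [hs] at h1
  exact Set.subset_empty_iff.mp h1
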